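/- Let p be a prime and n ≥ 0. For σ drawn uniformly from the nonsimple p-nary butterfly permutations B_n^{(p)}, the expected number of cycles is E C(σ) = (2 − 1/p)^n. Moreover, for p = 2 the second moment is E[C(σ)²] = (4/3)·(3/2)^{2n} − (1/3)·(3/2)^n, so Var C(σ) = (1/3)·(3/2)^{2n} − (1/3)·(3/2)^n. -/

import Mathlib

/-- Kronecker product of permutations: `(i, r) ↦ (σ i, π r)` under the
row-major identification `Fin (a * b) ≃ Fin a × Fin b`. -/
def permKron {a b : ℕ} (σ : Equiv.Perm (Fin a)) (π : Equiv.Perm (Fin b)) :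
    Equiv.Perm (Fin (a * b)) :=
  finProdFinEquiv.symm.trans ((Equiv.prodCongr σ π).trans finProdFinEquiv)

/-- Direct (block) sum of permutations: `(i, r) ↦ (i, π i r)`. -/
def permBlockSum {a b : ℕ} (π : Fin a → Equiv.Perm (Fin b)) :
    Equiv.Perm (Fin (a * b)) :=
  finProdFinEquiv.symm.trans ((Equiv.prodCongrRight π).trans finProdFinEquiv)

/-- The simple `m`-nary butterfly permutations of `Fin (m ^ n)`:
Kronecker products `τ^{a₁} ⊗ ⋯ ⊗ τ^{aₙ}` of powers of the standard `m`-cycle `τ = finRotate m`. -/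
def simpleButterfly (m : ℕ) : (n : ℕ) → Set (Equiv.Perm (Fin (m ^ n)))
  | 0 => {1}
  | n + 1 =>
    {σ | ∃ (a : ℤ) (π : Equiv.Perm (Fin (m ^ n))), π ∈ simpleButterfly m n ∧
      σ = (finCongr (pow_succ' m n).symm).permCongr (permKron (finRotate m ^ a) π)}

/-- The nonsimple `m`-nary butterfly permutations of `Fin (m ^ n)`:
`B₀ = {1}`, `B_{n+1} = {(τ^a ⊗ id) ∘ (σ₁ ⊕ ⋯ ⊕ σ_m) : σᵢ ∈ B_n}`. -/
def nonsimpleButterfly (m : ℕ) : (n : ℕ) → Set (Equiv.Perm (Fin (m ^ n)))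
  | 0 => {1}
  | n + 1 =>
    {σ | ∃ (a : ℤ) (π : Fin m → Equiv.Perm (Fin (m ^ n))),
      (∀ i, π i ∈ nonsimpleButterfly m n) ∧
      σ = (finCongr (pow_succ' m n).symm).permCongr
        (permKron (finRotate m ^ a) 1 * permBlockSum π)}

/-- The length of the longest increasing subsequence of a permutation. -/
noncomputable def LIS {M : ℕ} (σ : Equiv.Perm (Fin M)) : ℕ :=
  sSup {k | ∃ t : Finset (Fin M), t.card = k ∧ StrictMonoOn (⇑σ) ↑t}

/-- The length of the longest decreasing subsequence of a permutation. -/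
noncomputable def LDS {M : ℕ} (σ : Equiv.Perm (Fin M)) : ℕ :=
  sSup {k | ∃ t : Finset (Fin M), t.card = k ∧ StrictAntiOn (⇑σ) ↑t}

/-- The number of cycles in the disjoint cycle decomposition of `σ`,
counting fixed points as cycles of length 1. -/
def numCycles {M : ℕ} (σ : Equiv.Perm (Fin M)) : ℕ :=
  Multiset.card σ.cycleType + (Finset.univ.filter fun x => σ x = x).card

/-- The number of fixed points of `σ`. -/
def numFixed {M : ℕ} (σ : Equiv.Perm (Fin M)) : ℕ :=
  (Finset.univ.filter fun x => σ x = x).card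

/-!
Write `Fin (p ^ (n + 1))` as `Fin p × Fin (p ^ n)`. Then `σ ∈ B_{n+1}` is exactly the shear
`(i, r) ↦ (c i, π i r)` with `c` a power of the `p`-cycle and `π i ∈ B_n`, the pair `(c, π)` is
determined by `σ`, and `B_n` is a group (an iterated wreath product). If `c = 1` the cycles of
`σ` are those of the `π i`, so `C(σ) = ∑ i, C(π i)`. If `c ≠ 1` then, `p` being prime, `c` is a
full `p`-cycle, and the cycles of `σ` correspond to those of its return map
`π (c^(p-1) i₀) ⋯ π (c i₀) * π i₀` on the fibre over `i₀`. For fixed `π i`, `i ≠ i₀`, this is a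
left translate of `π i₀`, hence uniformly distributed on `B_n`. Averaging over `c`,
`E_{n+1} f(C) = (1/p) E f(C(π 0) + ⋯ + C(π (p-1))) + (1 - 1/p) E_n f(C)`, which gives
`E C = (2 - 1/p)ⁿ` and, for `p = 2`, `E_{n+1} C² = (3/2) E_n C² + (E_n C)²`.
-/

open Equiv (Perm prodShear)
open Function

section Shear

variable {ι β G : Type*}

def shearCocycle [Monoid G] (c : Perm ι) (π : ι → G) : ℕ → ι → G
  | 0, _ => 1
  | k + 1, i => shearCocycle c π k (c i) * π i

theorem shearCocycle_succ [Monoid G] (c : Perm ι) (π : ι → G) (k : ℕ) (i : ι) :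
    shearCocycle c π (k + 1) i = shearCocycle c π k (c i) * π i := rfl

theorem map_shearCocycle {H F : Type*} [Monoid G] [Monoid H] [FunLike F G H]
    [MonoidHomClass F G H] (φ : F) (c : Perm ι) (π : ι → G) (k : ℕ) (i : ι) :
    φ (shearCocycle c π k i) = shearCocycle c (fun i => φ (π i)) k i := by
  induction k generalizing i with
  | zero => exact map_one φ
  | succ k ih => rw [shearCocycle_succ, map_mul, ih, shearCocycle_succ]

theorem shearCocycle_one [Monoid G] (π : ι → G) (k : ℕ) (i : ι) :
    shearCocycle 1 π k i = π i ^ k := by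
  induction k with
  | zero => exact (pow_zero _).symm
  | succ k ih => rw [shearCocycle_succ, Perm.one_apply, ih, pow_succ]

theorem shearCocycle_congr [Monoid G] (c : Perm ι) {π π' : ι → G} {k : ℕ} {i : ι}
    (h : ∀ t < k, π ((c ^ t) i) = π' ((c ^ t) i)) :
    shearCocycle c π k i = shearCocycle c π' k i := by
  induction k generalizing i with
  | zero => rfl
  | succ k ih =>
    have h0 : π i = π' i := by simpa using h 0 k.succ_pos
    rw [shearCocycle_succ, shearCocycle_succ, h0,
      ih fun t ht => by simpa [pow_succ] using h (t + 1) (by omega)]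

theorem prodShear_pow_apply (c : Perm ι) (π : ι → Perm β) (k : ℕ) (x : ι × β) :
    (prodShear c π ^ k) x = ((c ^ k) x.1, shearCocycle c π k x.1 x.2) := by
  induction k generalizing x with
  | zero => rfl
  | succ k ih => simp [pow_succ, ih, shearCocycle_succ]

theorem prodShear_mul_prodShear (c c' : Perm ι) (π π' : ι → Perm β) :
    prodShear c π * prodShear c' π' = prodShear (c * c') fun i => π (c' i) * π' i :=
  Equiv.ext fun _ => rfl

theorem prodShear_one_one : prodShear (1 : Perm ι) (fun _ => (1 : Perm β)) = 1 :=
  Equiv.ext fun _ => rfl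

theorem inv_prodShear (c : Perm ι) (π : ι → Perm β) :
    (prodShear c π)⁻¹ = prodShear c⁻¹ fun i => (π (c⁻¹ i))⁻¹ := by
  rw [inv_eq_iff_mul_eq_one, prodShear_mul_prodShear]
  ext <;> simp

theorem prodShear_injective [Nonempty β] :
    Injective fun x : Perm ι × (ι → Perm β) => (prodShear x.1 x.2 : Perm (ι × β)) := by
  rintro ⟨c, π⟩ ⟨c', π'⟩ h
  obtain ⟨r₀⟩ := ‹Nonempty β›
  have h' (i : ι) (r : β) := DFunLike.congr_fun h (i, r)
  simp only [Equiv.prodShear_apply, Prod.mk.injEq] at h'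
  exact Prod.ext (Equiv.ext fun i => (h' i r₀).1) (funext fun i => Equiv.ext fun r => (h' i r).2)

/-- The permutational wreath product `S ≀ C`, realised by shears of `ι × β`. -/
def shearSubgroup (C : Subgroup (Perm ι)) (S : Subgroup (Perm β)) :
    Subgroup (Perm (ι × β)) where
  carrier := Set.range fun x : C × (ι → S) => prodShear (x.1 : Perm ι) fun i => (x.2 i : Perm β)
  mul_mem' := by
    rintro _ _ ⟨⟨c, π⟩, rfl⟩ ⟨⟨c', π'⟩, rfl⟩
    exact ⟨⟨c * c', fun i => π ((c' : Perm ι) i) * π' i⟩,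
      (prodShear_mul_prodShear (c : Perm ι) c' (fun i => (π i : Perm β)) fun i => π' i).symm⟩
  one_mem' := ⟨⟨1, 1⟩, prodShear_one_one⟩
  inv_mem' := by
    rintro _ ⟨⟨c, π⟩, rfl⟩
    exact ⟨⟨c⁻¹, fun i => (π ((c : Perm ι)⁻¹ i))⁻¹⟩,
      (inv_prodShear (c : Perm ι) fun i => (π i : Perm β)).symm⟩

end Shear

namespace Equiv.Perm

variable {α β ι : Type*}

noncomputable def cycleCount (σ : Perm α) : ℕ :=
  Nat.card (Quotient (SameCycle.setoid σ))

theorem cycleCount_eq_natCard {σ : Perm α} {T : Type*} (φ : α → T) (hφ : Surjective φ)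
    (h : ∀ x y, σ.SameCycle x y ↔ φ x = φ y) : σ.cycleCount = Nat.card T := by
  rw [cycleCount, show SameCycle.setoid σ = Setoid.ker φ from Setoid.ext h]
  exact Nat.card_congr (Setoid.quotientKerEquivOfSurjective φ hφ)

theorem sameCycle_iff_exists_pow_apply_eq [Finite α] {σ : Perm α} {x y : α} :
    σ.SameCycle x y ↔ ∃ k : ℕ, (σ ^ k) x = y :=
  ⟨SameCycle.exists_nat_pow_eq, fun ⟨k, hk⟩ => ⟨k, by rwa [zpow_natCast]⟩⟩

theorem cycleCount_permCongr (e : α ≃ β) (σ : Perm α) :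
    (e.permCongr σ).cycleCount = σ.cycleCount := by
  refine (cycleCount_eq_natCard (fun x => Quotient.mk _ (e.symm x))
    (Quotient.mk_surjective.comp e.symm.surjective) fun x y => ?_).trans rfl
  rw [Quotient.eq]
  refine exists_congr fun k => ?_
  rw [show e.permCongr σ ^ k = e.permCongr (σ ^ k) from (map_zpow e.permCongrHom σ k).symm]
  simp [permCongr_apply, eq_symm_apply]

theorem cycleCount_prodShear_one [Fintype ι] [Finite β] (π : ι → Perm β) :
    cycleCount (prodShear 1 π : Perm (ι × β)) = ∑ i, (π i).cycleCount := by
  rw [cycleCount_eq_natCard (T := Σ i, Quotient (SameCycle.setoid (π i)))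
    (fun x => ⟨x.1, Quotient.mk _ x.2⟩) (fun ⟨i, q⟩ => by
      obtain ⟨r, rfl⟩ := Quotient.mk_surjective q
      exact ⟨(i, r), rfl⟩), Nat.card_sigma]
  · rfl
  rintro ⟨i, r⟩ ⟨j, s⟩
  simp only [sameCycle_iff_exists_pow_apply_eq, prodShear_pow_apply, shearCocycle_one,
    Perm.one_apply, one_pow, Prod.mk.injEq]
  constructor
  · rintro ⟨k, rfl, hk⟩
    exact Sigma.ext rfl (heq_of_eq (Quotient.sound ⟨k, by rwa [zpow_natCast]⟩))
  · intro h
    obtain ⟨rfl, h⟩ := Sigma.mk.inj_iff.1 h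
    obtain ⟨k, hk⟩ := (Quotient.exact (eq_of_heq h)).exists_nat_pow_eq
    exact ⟨k, rfl, hk⟩

section FirstReturn

/- `ρ` is the first-return map of `σ` to the range of `j`: starting in the range, `σ ^ k` lands
in it again only when `m ∣ k`, and `σ ^ m` acts there as `ρ`. -/
variable [Finite α] {σ : Perm α} {ρ : Perm β} {j : β → α} {m : ℕ}

theorem sameCycle_apply_iff_of_firstReturn (hj : Injective j)
    (hρ : ∀ r, (σ ^ m) (j r) = j (ρ r)) (hret : ∀ k r s, (σ ^ k) (j r) = j s → m ∣ k)
    {r s : β} : σ.SameCycle (j r) (j s) ↔ ρ.SameCycle r s := by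
  have : Finite β := Finite.of_injective j hj
  have hpow (t : ℕ) (r : β) : (σ ^ (m * t)) (j r) = j ((ρ ^ t) r) := by
    induction t generalizing r with
    | zero => simp
    | succ t ih => rw [mul_add_one, pow_add, mul_apply, hρ, ih, pow_succ, mul_apply]
  simp only [sameCycle_iff_exists_pow_apply_eq]
  constructor
  · rintro ⟨k, hk⟩
    obtain ⟨t, rfl⟩ := hret k r s hk
    exact ⟨t, hj (by rw [← hpow, hk])⟩
  · rintro ⟨t, rfl⟩
    exact ⟨m * t, hpow t r⟩

theorem cycleCount_eq_of_firstReturn (hj : Injective j)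
    (hρ : ∀ r, (σ ^ m) (j r) = j (ρ r)) (hret : ∀ k r s, (σ ^ k) (j r) = j s → m ∣ k)
    (hmeets : ∀ x, ∃ r, σ.SameCycle x (j r)) : σ.cycleCount = ρ.cycleCount := by
  choose φ hφ using hmeets
  have key (r s : β) := sameCycle_apply_iff_of_firstReturn hj hρ hret (r := r) (s := s)
  refine cycleCount_eq_natCard (fun x => Quotient.mk _ (φ x)) (fun q => ?_) fun x y => ?_
  · obtain ⟨r, rfl⟩ := Quotient.mk_surjective q
    exact ⟨j r, Quotient.sound ((key _ _).1 (hφ (j r)).symm)⟩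
  · rw [Quotient.eq]
    change _ ↔ ρ.SameCycle _ _
    rw [← key]
    exact ⟨fun h => ((hφ x).symm.trans h).trans (hφ y),
      fun h => ((hφ x).trans h).trans (hφ y).symm⟩

end FirstReturn

theorem cycleCount_prodShear_of_isCycleOn [Fintype ι] [Finite β] {c : Perm ι}
    (hc : c.IsCycleOn (Finset.univ : Finset ι)) (π : ι → Perm β) (i₀ : ι) :
    cycleCount (prodShear c π : Perm (ι × β)) =
      (shearCocycle c π (Fintype.card ι) i₀).cycleCount := by
  refine cycleCount_eq_of_firstReturn (Prod.mk_right_injective i₀) (m := Fintype.card ι)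
    (fun r => ?_) (fun k r s h => ?_) fun ⟨i, r⟩ => ?_
  · rw [prodShear_pow_apply, ← Finset.card_univ, hc.pow_card_apply (Finset.mem_univ i₀)]
  · rw [← Finset.card_univ, ← hc.pow_apply_eq (Finset.mem_univ i₀)]
    simpa [prodShear_pow_apply] using congrArg Prod.fst h
  · obtain ⟨k, -, hk⟩ := hc.exists_pow_eq (Finset.mem_univ i) (Finset.mem_univ i₀)
    refine ⟨shearCocycle c π k i r, ?_⟩
    rw [← hk]
    exact prodShear_pow_apply c π k (i, r) ▸ sameCycle_pow_right.2 .rfl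

end Equiv.Perm

open Equiv.Perm

theorem numCycles_eq_cycleCount {M : ℕ} (σ : Perm (Fin M)) : numCycles σ = σ.cycleCount := by
  classical
  let φ : Fin M → σ.cycleFactorsFinset ⊕ {x // σ x = x} := fun x =>
    if hx : σ x = x then .inr ⟨x, hx⟩
    else .inl ⟨σ.cycleOf x, cycleOf_mem_cycleFactorsFinset_iff.2 (mem_support.2 hx)⟩
  have hφ : Surjective φ := by
    rintro (⟨c, hc⟩ | ⟨x, hx⟩)
    · obtain ⟨x, hx⟩ := (mem_cycleFactorsFinset_iff.1 hc).1.nonempty_support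
      have hσx : σ x ≠ x := mem_support.1 (mem_cycleFactorsFinset_support_le hc hx)
      exact ⟨x, by simp [φ, hσx, ← cycle_is_cycleOf hx hc]⟩
    · exact ⟨x, by simp [φ, hx]⟩
  have hfix {x y : Fin M} (hx : σ x = x) : σ.SameCycle x y ↔ x = y :=
    ⟨fun h => h.eq_of_left hx, fun h => h ▸ .rfl⟩
  have h (x y : Fin M) : σ.SameCycle x y ↔ φ x = φ y := by
    by_cases hx : σ x = x <;> by_cases hy : σ y = y
    · simp [φ, hx, hy, hfix hx]
    · simpa [φ, hx, hy, hfix hx] using fun h : x = y => hy (h ▸ hx)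
    · simpa [φ, hx, hy, sameCycle_comm.trans (hfix hy)] using fun h : y = x => hx (h ▸ hy)
    · simpa [φ, hx, hy] using
        sameCycle_iff_cycleOf_eq_of_mem_support (mem_support.2 hx) (mem_support.2 hy)
  rw [cycleCount_eq_natCard φ hφ h, Nat.card_sum, numCycles, cycleType_def, Multiset.card_map,
    Nat.card_eq_fintype_card, Nat.card_eq_fintype_card, Fintype.card_coe, Fintype.card_subtype]
  rfl

theorem numCycles_one (M : ℕ) : numCycles (1 : Perm (Fin M)) = M := by
  simp [numCycles]

section Averaging

variable {ι G M : Type*} [Fintype ι] [DecidableEq ι] [Fintype G] [AddCommMonoid M]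

theorem Fintype.sum_apply_eq_card_pow_smul (i₀ : ι) (f : G → M) :
    ∑ π : ι → G, f (π i₀) = Fintype.card G ^ (Fintype.card ι - 1) • ∑ x, f x := by
  rw [← (Equiv.piSplitAt i₀ fun _ => G).symm.sum_comp, Fintype.sum_prod_type]
  simp [Finset.smul_sum]

theorem Fintype.sum_mul_apply_eq_sum_apply [Group G] (i₀ : ι) (w : (ι → G) → G)
    (hw : ∀ π g, w (update π i₀ g) = w π) (f : G → M) :
    ∑ π : ι → G, f (w π * π i₀) = ∑ π : ι → G, f (π i₀) := by
  let e : (ι → G) ≃ (ι → G) :=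
    { toFun := fun π => update π i₀ (w π * π i₀)
      invFun := fun π => update π i₀ ((w π)⁻¹ * π i₀)
      left_inv := fun π => by simp [hw]
      right_inv := fun π => by simp [hw] }
  exact Fintype.sum_equiv e (fun π => f (w π * π i₀)) (fun π => f (π i₀)) fun π => by simp [e]

end Averaging

namespace Equiv.Perm

variable {β ι M : Type*} [Finite β] [AddCommMonoid M] {p : ℕ}

theorem sum_comp_cycleCount_prodShear_of_isCycleOn [Fintype ι] [DecidableEq ι] [Nonempty ι]
    {c : Perm ι} (hc : c.IsCycleOn (Finset.univ : Finset ι)) (S : Subgroup (Perm β)) [Fintype S]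
    (f : ℕ → M) :
    ∑ π : ι → S, f (cycleCount (prodShear c fun i => (π i : Perm β))) =
      Fintype.card S ^ (Fintype.card ι - 1) • ∑ x : S, f (x : Perm β).cycleCount := by
  obtain ⟨i₀⟩ := ‹Nonempty ι›
  obtain ⟨m, hm⟩ := Nat.exists_eq_add_one_of_ne_zero (Fintype.card_ne_zero (α := ι))
  have hw (π : ι → S) (g : S) :
      shearCocycle c (update π i₀ g) m (c i₀) = shearCocycle c π m (c i₀) := by
    refine shearCocycle_congr c fun t ht => update_of_ne (fun h => ?_) _ _
    rw [← mul_apply, ← pow_succ, hc.pow_apply_eq (Finset.mem_univ i₀), Finset.card_univ, hm] at h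
    exact absurd (Nat.le_of_dvd t.succ_pos h) (by omega)
  calc ∑ π : ι → S, f (cycleCount (prodShear c fun i => (π i : Perm β)))
      = ∑ π : ι → S, f ((shearCocycle c π m (c i₀) * π i₀ : S) : Perm β).cycleCount := by
        refine Fintype.sum_congr _ _ fun π => ?_
        rw [cycleCount_prodShear_of_isCycleOn hc _ i₀, hm, ← shearCocycle_succ]
        exact congrArg (fun τ => f τ.cycleCount) (map_shearCocycle S.subtype c π (m + 1) i₀).symm
    _ = ∑ π : ι → S, f (π i₀ : Perm β).cycleCount :=
        Fintype.sum_mul_apply_eq_sum_apply i₀ _ hw fun x : S => f (x : Perm β).cycleCount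
    _ = _ := Fintype.sum_apply_eq_card_pow_smul i₀ fun x : S => f (x : Perm β).cycleCount

theorem orderOf_finRotate (hp : 2 ≤ p) : orderOf (finRotate p) = p := by
  rw [(isCycle_finRotate_of_le hp).orderOf, support_finRotate_of_le hp, Finset.card_univ,
    Fintype.card_fin]

theorem isCycleOn_of_mem_zpowers_finRotate (hp : p.Prime) {c : Perm (Fin p)}
    (hc : c ∈ Subgroup.zpowers (finRotate p)) (h1 : c ≠ 1) :
    c.IsCycleOn (Finset.univ : Finset (Fin p)) := by
  have hcycle := isCycle_finRotate_of_le hp.two_le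
  have hord := orderOf_finRotate hp.two_le
  obtain ⟨k, hk, rfl⟩ := Finset.mem_image.1 (mem_zpowers_iff_mem_range_orderOf.1 hc)
  rw [Finset.mem_range] at hk
  have hk0 : 0 < k := Nat.pos_of_ne_zero fun h => h1 (by simp [h])
  have hsupp := hcycle.support_pow_of_pos_of_lt_orderOf hk0 hk
  rw [support_finRotate_of_le hp.two_le] at hsupp
  convert (hcycle.isCycle_pow_pos_of_lt_prime_order (by rwa [hord]) k hk0 hk).isCycleOn
  ext x
  simpa using (Finset.ext_iff.1 hsupp x).symm

theorem sum_comp_cycleCount_prodShear_zpowers_finRotate (hp : p.Prime)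
    (S : Subgroup (Perm β)) [Fintype S] (f : ℕ → M) :
    ∑ c : Subgroup.zpowers (finRotate p), ∑ π : Fin p → S,
        f (cycleCount (prodShear (c : Perm (Fin p)) fun i => (π i : Perm β))) =
      ∑ π : Fin p → S, f (∑ i, (π i : Perm β).cycleCount) +
        (p - 1) • Fintype.card S ^ (p - 1) • ∑ x : S, f (x : Perm β).cycleCount := by
  have : NeZero p := ⟨hp.ne_zero⟩
  rw [Fintype.sum_eq_add_sum_compl 1]
  congr 1
  · simp only [OneMemClass.coe_one, cycleCount_prodShear_one]
  · rw [Finset.sum_congr rfl fun c hc => sum_comp_cycleCount_prodShear_of_isCycleOn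
      (isCycleOn_of_mem_zpowers_finRotate hp c.2 (by simpa using hc)) S f,
      Finset.sum_const, Finset.card_compl, Finset.card_singleton, Fintype.card_zpowers,
      orderOf_finRotate hp.two_le, Fintype.card_fin]

theorem sum_cycleCount_prodShear_zpowers_finRotate (hp : p.Prime) (S : Subgroup (Perm β))
    [Fintype S] :
    ∑ c : Subgroup.zpowers (finRotate p), ∑ π : Fin p → S,
        cycleCount (prodShear (c : Perm (Fin p)) fun i => (π i : Perm β)) =
      (2 * p - 1) * Fintype.card S ^ (p - 1) * ∑ x : S, (x : Perm β).cycleCount := by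
  refine (sum_comp_cycleCount_prodShear_zpowers_finRotate hp S id).trans ?_
  simp only [id]
  rw [Finset.sum_comm]
  simp only [Fintype.sum_apply_eq_card_pow_smul _ fun x : S => (x : Perm β).cycleCount,
    Finset.sum_const, Finset.card_univ, Fintype.card_fin, smul_eq_mul, ← add_mul, mul_assoc]
  congr 1
  have := hp.one_le
  omega

theorem sum_cycleCount_sq_prodShear_zpowers_finRotate_two (S : Subgroup (Perm β)) [Fintype S] :
    ∑ c : Subgroup.zpowers (finRotate 2), ∑ π : Fin 2 → S,
        cycleCount (prodShear (c : Perm (Fin 2)) fun i => (π i : Perm β)) ^ 2 =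
      3 * Fintype.card S * ∑ x : S, (x : Perm β).cycleCount ^ 2 +
        2 * (∑ x : S, (x : Perm β).cycleCount) ^ 2 := by
  refine (sum_comp_cycleCount_prodShear_zpowers_finRotate Nat.prime_two S (· ^ 2)).trans ?_
  rw [← (piFinTwoEquiv fun _ => S).symm.sum_comp, Fintype.sum_prod_type]
  simp only [Fin.sum_univ_two, piFinTwoEquiv_symm_apply, Fin.cons_zero, Fin.cons_one, add_sq,
    Finset.sum_add_distrib, ← Finset.mul_sum, ← Finset.sum_mul, Finset.sum_const,
    Finset.card_univ, smul_eq_mul]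
  ring

end Equiv.Perm

theorem Subgroup.sum_eq_finsum_mem {G M : Type*} [Group G] [AddCommMonoid M] {H : Subgroup G}
    [Fintype H] {s : Set G} (hH : (H : Set G) = s) (g : G → M) :
    ∑ x : H, g x = ∑ᶠ σ ∈ s, g σ := by
  rw [← hH, ← finsum_set_coe_eq_finsum_mem, finsum_eq_sum_of_fintype]
  rfl

theorem Subgroup.card_eq_ncard {G : Type*} [Group G] {H : Subgroup G} [Fintype H] {s : Set G}
    (hH : (H : Set G) = s) : Fintype.card H = s.ncard := by
  rw [← hH, ← Nat.card_coe_set_eq, Nat.card_eq_fintype_card]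
  rfl

def butterflyEquiv (p n : ℕ) : Fin p × Fin (p ^ n) ≃ Fin (p ^ (n + 1)) :=
  finProdFinEquiv.trans (finCongr (pow_succ' p n).symm)

theorem permCongr_permKron_mul_permBlockSum {p n : ℕ} (c : Perm (Fin p))
    (π : Fin p → Perm (Fin (p ^ n))) :
    (finCongr (pow_succ' p n).symm).permCongr (permKron c 1 * permBlockSum π) =
      (butterflyEquiv p n).permCongr (prodShear c π) := by
  ext x
  simp [butterflyEquiv, permKron, permBlockSum, Equiv.permCongr_apply]

theorem nonsimpleButterfly_succ_eq_range {p n : ℕ} {H : Subgroup (Perm (Fin (p ^ n)))}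
    (hH : (H : Set (Perm (Fin (p ^ n)))) = nonsimpleButterfly p n) :
    nonsimpleButterfly p (n + 1) =
      Set.range fun x : Subgroup.zpowers (finRotate p) × (Fin p → H) =>
        (butterflyEquiv p n).permCongr
          (prodShear (x.1 : Perm (Fin p)) fun i => (x.2 i : Perm (Fin (p ^ n)))) := by
  ext σ
  simp only [nonsimpleButterfly, Set.mem_ofPred_eq, Set.mem_range, ← hH, SetLike.mem_coe]
  constructor
  · rintro ⟨a, π, hπ, rfl⟩
    exact ⟨(⟨_, Subgroup.zpow_mem_zpowers _ a⟩, fun i => ⟨π i, hπ i⟩),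
      (permCongr_permKron_mul_permBlockSum _ _).symm⟩
  · rintro ⟨⟨⟨c, hc⟩, π⟩, rfl⟩
    obtain ⟨a, rfl⟩ := Subgroup.mem_zpowers_iff.1 hc
    exact ⟨a, fun i => π i, fun i => (π i).2, (permCongr_permKron_mul_permBlockSum _ _).symm⟩

theorem exists_subgroup_coe_eq_nonsimpleButterfly (p n : ℕ) :
    ∃ H : Subgroup (Perm (Fin (p ^ n))),
      (H : Set (Perm (Fin (p ^ n)))) = nonsimpleButterfly p n := by
  induction n with
  | zero => exact ⟨⊥, Subgroup.coe_bot⟩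
  | succ n ih =>
    obtain ⟨H, hH⟩ := ih
    refine ⟨(shearSubgroup (Subgroup.zpowers (finRotate p)) H).map
      (butterflyEquiv p n).permCongrHom.toMonoidHom, ?_⟩
    rw [nonsimpleButterfly_succ_eq_range hH, Subgroup.coe_map]
    exact (Set.range_comp _ _).symm

theorem ncard_nonsimpleButterfly_pos (p n : ℕ) : 0 < (nonsimpleButterfly p n).ncard := by
  obtain ⟨H, hH⟩ := exists_subgroup_coe_eq_nonsimpleButterfly p n
  exact (Set.ncard_pos (Set.toFinite _)).2 ⟨1, hH ▸ H.one_mem⟩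

theorem injective_permCongr_prodShear_zpowers_finRotate {p n : ℕ} (hp : 0 < p)
    (H : Subgroup (Perm (Fin (p ^ n)))) :
    Injective fun x : Subgroup.zpowers (finRotate p) × (Fin p → H) =>
      (butterflyEquiv p n).permCongr
        (prodShear (x.1 : Perm (Fin p)) fun i => (x.2 i : Perm (Fin (p ^ n)))) := by
  have : Nonempty (Fin (p ^ n)) := ⟨⟨0, pow_pos hp n⟩⟩
  exact (butterflyEquiv p n).permCongr.injective.comp <| prodShear_injective.comp <|
    Subtype.val_injective.prodMap Subtype.val_injective.comp_left

theorem finsum_mem_nonsimpleButterfly_succ {p n : ℕ} {M : Type*} [AddCommMonoid M] (hp : 0 < p)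
    {H : Subgroup (Perm (Fin (p ^ n)))}
    (hH : (H : Set (Perm (Fin (p ^ n)))) = nonsimpleButterfly p n) [Fintype H]
    (g : Perm (Fin (p ^ (n + 1))) → M) :
    ∑ᶠ σ ∈ nonsimpleButterfly p (n + 1), g σ =
      ∑ c : Subgroup.zpowers (finRotate p), ∑ π : Fin p → H,
        g ((butterflyEquiv p n).permCongr
          (prodShear (c : Perm (Fin p)) fun i => (π i : Perm (Fin (p ^ n))))) := by
  rw [nonsimpleButterfly_succ_eq_range hH,
    finsum_mem_range (injective_permCongr_prodShear_zpowers_finRotate hp H),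
    finsum_eq_sum_of_fintype, Fintype.sum_prod_type]

theorem ncard_nonsimpleButterfly_succ {p n : ℕ} (hp : p.Prime) :
    (nonsimpleButterfly p (n + 1)).ncard = p * (nonsimpleButterfly p n).ncard ^ p := by
  obtain ⟨H, hH⟩ := exists_subgroup_coe_eq_nonsimpleButterfly p n
  rw [nonsimpleButterfly_succ_eq_range hH, ← Nat.card_coe_set_eq,
    Nat.card_range_of_injective (injective_permCongr_prodShear_zpowers_finRotate hp.pos H),
    Nat.card_prod, Nat.card_zpowers, orderOf_finRotate hp.two_le, Nat.card_fun, Nat.card_fin,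
    ← hH, ← Nat.card_coe_set_eq]
  rfl

theorem finsum_numCycles_nonsimpleButterfly_succ {p : ℕ} (hp : p.Prime) (n : ℕ) :
    ∑ᶠ σ ∈ nonsimpleButterfly p (n + 1), numCycles σ =
      (2 * p - 1) * (nonsimpleButterfly p n).ncard ^ (p - 1) *
        ∑ᶠ σ ∈ nonsimpleButterfly p n, numCycles σ := by
  obtain ⟨H, hH⟩ := exists_subgroup_coe_eq_nonsimpleButterfly p n
  have := Fintype.ofFinite H
  simp only [finsum_mem_nonsimpleButterfly_succ hp.pos hH, numCycles_eq_cycleCount,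
    cycleCount_permCongr]
  rw [sum_cycleCount_prodShear_zpowers_finRotate hp H, Subgroup.card_eq_ncard hH,
    Subgroup.sum_eq_finsum_mem hH]

theorem finsum_numCycles_sq_nonsimpleButterfly_two_succ (n : ℕ) :
    ∑ᶠ σ ∈ nonsimpleButterfly 2 (n + 1), numCycles σ ^ 2 =
      3 * (nonsimpleButterfly 2 n).ncard * ∑ᶠ σ ∈ nonsimpleButterfly 2 n, numCycles σ ^ 2 +
        2 * (∑ᶠ σ ∈ nonsimpleButterfly 2 n, numCycles σ) ^ 2 := by
  obtain ⟨H, hH⟩ := exists_subgroup_coe_eq_nonsimpleButterfly 2 n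
  have := Fintype.ofFinite H
  simp only [finsum_mem_nonsimpleButterfly_succ two_pos hH, numCycles_eq_cycleCount,
    cycleCount_permCongr]
  rw [sum_cycleCount_sq_prodShear_zpowers_finRotate_two H, Subgroup.card_eq_ncard hH,
    Subgroup.sum_eq_finsum_mem hH fun σ => σ.cycleCount ^ 2, Subgroup.sum_eq_finsum_mem hH]

theorem finsum_numCycles_nonsimpleButterfly {p : ℕ} (hp : p.Prime) (n : ℕ) :
    ((∑ᶠ σ ∈ nonsimpleButterfly p n, numCycles σ : ℕ) : ℝ) =
      (nonsimpleButterfly p n).ncard * (2 - 1 / (p : ℝ)) ^ n := by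
  induction n with
  | zero =>
    rw [show nonsimpleButterfly p 0 = {1} from rfl, finsum_mem_singleton, Set.ncard_singleton,
      numCycles_one]
    simp
  | succ n ih =>
    obtain ⟨k, rfl⟩ : ∃ k, p = k + 1 := ⟨p - 1, (Nat.sub_add_cancel hp.one_le).symm⟩
    have hk : (2 * k + 1 : ℝ) = (k + 1) * (2 - 1 / ((k + 1 : ℕ) : ℝ)) := by
      push_cast
      field_simp
      ring
    rw [finsum_numCycles_nonsimpleButterfly_succ hp, ncard_nonsimpleButterfly_succ hp,
      Nat.add_sub_cancel, show 2 * (k + 1) - 1 = 2 * k + 1 by omega, Nat.cast_mul, Nat.cast_mul,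
      ih, Nat.cast_pow, Nat.cast_add_one, Nat.cast_mul, Nat.cast_ofNat, hk]
    push_cast
    ring

theorem finsum_numCycles_sq_nonsimpleButterfly_two (n : ℕ) :
    ((∑ᶠ σ ∈ nonsimpleButterfly 2 n, numCycles σ ^ 2 : ℕ) : ℝ) =
      (nonsimpleButterfly 2 n).ncard *
        ((4 / 3) * ((3 : ℝ) / 2) ^ (2 * n) - (1 / 3) * ((3 : ℝ) / 2) ^ n) := by
  induction n with
  | zero =>
    rw [show nonsimpleButterfly 2 0 = {1} from rfl, finsum_mem_singleton, Set.ncard_singleton,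
      numCycles_one]
    norm_num
  | succ n ih =>
    rw [finsum_numCycles_sq_nonsimpleButterfly_two_succ,
      ncard_nonsimpleButterfly_succ Nat.prime_two, Nat.cast_add, Nat.cast_mul, Nat.cast_mul,
      Nat.cast_mul, Nat.cast_pow, ih, finsum_numCycles_nonsimpleButterfly Nat.prime_two n]
    push_cast
    ring

/-- For `σ` uniform on the nonsimple `p`-nary butterfly permutations (`p` prime),
`E C(σ) = (2 − 1/p)ⁿ`; moreover for `p = 2`,
`E[C(σ)²] = (4/3)(3/2)^{2n} − (1/3)(3/2)ⁿ` and
`Var C(σ) = (1/3)(3/2)^{2n} − (1/3)(3/2)ⁿ`. -/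
theorem nonsimpleButterfly_cycle_moments (p n : ℕ) (hp : p.Prime) :
    (1 / ((nonsimpleButterfly p n).ncard : ℝ)) *
        ∑ᶠ σ ∈ nonsimpleButterfly p n, (numCycles σ : ℝ) = (2 - 1 / (p : ℝ)) ^ n ∧
    (p = 2 →
      (1 / ((nonsimpleButterfly p n).ncard : ℝ)) *
          ∑ᶠ σ ∈ nonsimpleButterfly p n, (numCycles σ : ℝ) ^ 2 =
        (4 / 3) * ((3 : ℝ) / 2) ^ (2 * n) - (1 / 3) * ((3 : ℝ) / 2) ^ n ∧
      (1 / ((nonsimpleButterfly p n).ncard : ℝ)) *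
          (∑ᶠ σ ∈ nonsimpleButterfly p n, (numCycles σ : ℝ) ^ 2) -
        ((1 / ((nonsimpleButterfly p n).ncard : ℝ)) *
          ∑ᶠ σ ∈ nonsimpleButterfly p n, (numCycles σ : ℝ)) ^ 2 =
        (1 / 3) * ((3 : ℝ) / 2) ^ (2 * n) - (1 / 3) * ((3 : ℝ) / 2) ^ n) := by
  have hN : ((nonsimpleButterfly p n).ncard : ℝ) ≠ 0 :=
    Nat.cast_ne_zero.2 (ncard_nonsimpleButterfly_pos p n).ne'
  have h1 : ∑ᶠ σ ∈ nonsimpleButterfly p n, (numCycles σ : ℝ) =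
      (nonsimpleButterfly p n).ncard * (2 - 1 / (p : ℝ)) ^ n := by
    rw [← Nat.cast_finsum_mem (Set.toFinite _), finsum_numCycles_nonsimpleButterfly hp]
  refine ⟨by rw [h1]; field_simp, fun hp2 => ?_⟩
  subst hp2
  have h2 : ∑ᶠ σ ∈ nonsimpleButterfly 2 n, (numCycles σ : ℝ) ^ 2 =
      (nonsimpleButterfly 2 n).ncard *
        ((4 / 3) * ((3 : ℝ) / 2) ^ (2 * n) - (1 / 3) * ((3 : ℝ) / 2) ^ n) := by
    simp_rw [← Nat.cast_pow]
    rw [← Nat.cast_finsum_mem (Set.toFinite _), finsum_numCycles_sq_nonsimpleButterfly_two]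
  rw [h1, h2, show (2 : ℝ) - 1 / ((2 : ℕ) : ℝ) = 3 / 2 by norm_num, pow_mul']
  refine ⟨by field_simp, ?_⟩
  field_simp
  ring
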